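/- arXiv:1605.04084 — 2 statements merged into one kernel-verified Lean document; each statement's English description precedes it below -/
import Mathlib

section
/- Let n be a positive integer, Q a positive divisor of n, f : Z/nZ → ℂ, and k an integer. Define ρ(a) = Σ_{x ∈ Z/nZ, x ≡ a mod Q} f(x). Then (1/Q) Σ_{r=0}^{Q-1} |f̂(rn/Q)|²·e^{-2πi·2kr/Q} = Σ_{a=0}^{Q-1} ρ(a)·conj(ρ(a+2k)), where a+2k is taken modulo Q and f is real-valued. -/
/-!
The frequency `r * (n / Q)` of `ZMod n` only sees `x` modulo `Q`, so `f̂ (r n / Q)` is the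
discrete Fourier transform `ρ̂ r` of the fibre sums on `ZMod Q`. The claim is then the
Wiener–Khinchin identity on `ZMod Q`: expanding `|ρ̂ r|² = ρ̂ r * conj (ρ̂ r)` and summing the
characters over `r` by orthogonality leaves the autocorrelation `∑ a, ρ a * conj (ρ (a + c))`.
-/

open Complex Finset Real
open scoped ComplexConjugate

open ZMod in
theorem ZMod.sum_normSq_dft_mul_stdAddChar {N : ℕ} [NeZero N] (Φ : ZMod N → ℂ) (c : ZMod N) :
    ∑ r, (normSq (𝓕 Φ r) : ℂ) * stdAddChar (-(c * r)) =
      N * ∑ a, Φ a * conj (Φ (a + c)) := by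
  have horth (t : ZMod N) : ∑ r, stdAddChar (r * t) = if t = 0 then (N : ℂ) else 0 := by
    simpa using AddChar.sum_mulShift t (isPrimitive_stdAddChar N)
  calc ∑ r, (normSq (𝓕 Φ r) : ℂ) * stdAddChar (-(c * r))
      = ∑ r, ∑ a, ∑ b, Φ a * conj (Φ b) * stdAddChar (r * (b - a - c)) := by
        refine sum_congr rfl fun r _ ↦ ?_
        rw [← mul_conj, dft_apply, map_sum, sum_mul_sum, sum_mul]
        refine sum_congr rfl fun a _ ↦ ?_
        rw [sum_mul]
        refine sum_congr rfl fun b _ ↦ ?_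
        rw [show r * (b - a - c) = -(a * r) + -(-(b * r)) + -(c * r) by ring,
          AddChar.map_add_eq_mul, AddChar.map_add_eq_mul, AddChar.map_neg_eq_conj _ (-(b * r))]
        simp only [smul_eq_mul, map_mul]
        ring
    _ = ∑ a, ∑ b, Φ a * conj (Φ b) * ∑ r, stdAddChar (r * (b - a - c)) := by
        rw [sum_comm]
        refine sum_congr rfl fun a _ ↦ ?_
        rw [sum_comm]
        simp only [mul_sum]
    _ = N * ∑ a, Φ a * conj (Φ (a + c)) := by
        simp only [horth, sub_sub, sub_eq_zero, mul_ite, mul_zero, sum_ite_eq', mem_univ,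
          if_true, mul_sum]
        refine sum_congr rfl fun a _ ↦ ?_
        ring

theorem Fintype.sum_mul_comp_eq_sum_fiberwise {α β R : Type*} [Fintype α] [Fintype β]
    [DecidableEq β] [NonUnitalNonAssocSemiring R] (p : α → β) (f : α → R) (g : β → R) :
    ∑ x, f x * g (p x) = ∑ b, (∑ x, if p x = b then f x else 0) * g b := by
  simp_rw [Finset.sum_mul, ite_mul, zero_mul]
  rw [Finset.sum_comm]
  simp only [Finset.sum_ite_eq, mem_univ, if_true]

theorem cexp_neg_val_mul_val_eq_stdAddChar {n Q : ℕ} [NeZero n] [NeZero Q] (hQn : Q ∣ n)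
    (r : ZMod Q) (x : ZMod n) :
    exp (-(2 * π * I * (((r.val * (n / Q) : ℕ)) : ZMod n).val * x.val / n)) =
      ZMod.stdAddChar (-(ZMod.castHom hQn (ZMod Q) x * r)) := by
  obtain ⟨N, hN⟩ := id hQn
  have hQ : 0 < Q := Nat.pos_of_neZero Q
  have hNpos : 0 < N := Nat.pos_of_mul_pos_left (hN ▸ Nat.pos_of_neZero n)
  have hval : (((r.val * (n / Q) : ℕ)) : ZMod n).val = r.val * N := by
    rw [hN, Nat.mul_div_cancel_left N hQ]
    exact ZMod.val_cast_of_lt (Nat.mul_lt_mul_of_pos_right r.val_lt hNpos)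
  have hcast :
      -(ZMod.castHom hQn (ZMod Q) x * r) = (Int.cast (-(x.val * r.val : ℤ)) : ZMod Q) := by
    rw [ZMod.castHom_apply, ZMod.cast_eq_val]
    push_cast
    rw [ZMod.natCast_zmod_val]
  have hnC : (n : ℂ) = Q * N := by exact_mod_cast hN
  have hNC : (N : ℂ) ≠ 0 := by exact_mod_cast hNpos.ne'
  rw [hcast, ZMod.stdAddChar_coe, hval, hnC]
  congr 1
  push_cast
  field_simp

theorem cexp_neg_int_mul_val_eq_stdAddChar {Q : ℕ} [NeZero Q] (m : ℤ) (r : ZMod Q) :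
    exp (-(2 * π * I * m * r.val / Q)) = ZMod.stdAddChar (-((m : ZMod Q) * r)) := by
  have hcast : -((m : ZMod Q) * r) = (Int.cast (-(m * r.val)) : ZMod Q) := by
    push_cast
    rw [ZMod.natCast_zmod_val]
  rw [hcast, ZMod.stdAddChar_coe]
  congr 1
  push_cast
  ring

theorem stmt_9 (n Q : ℕ) [NeZero n] [NeZero Q] (hQn : Q ∣ n) (k : ℤ)
    (f : ZMod n → ℝ) (ρ : ZMod Q → ℝ)
    (hρ : ∀ a : ZMod Q, ρ a = ∑ x : ZMod n,
      if ZMod.castHom hQn (ZMod Q) x = a then f x else 0) :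
    (1 / Q : ℂ) * ∑ r : ZMod Q,
        (Complex.normSq (∑ x : ZMod n, (f x : ℂ) *
            Complex.exp (-(2 * π * I * (((r.val * (n / Q) : ℕ)) : ZMod n).val * x.val / n))) : ℂ) *
          Complex.exp (-(2 * π * I * (2 * k) * r.val / Q)) =
      ∑ a : ZMod Q, ((ρ a * ρ (a + (2 * k : ℤ)) : ℝ) : ℂ) := by
  have hfourier (r : ZMod Q) :
      ∑ x : ZMod n, (f x : ℂ) *
          exp (-(2 * π * I * (((r.val * (n / Q) : ℕ)) : ZMod n).val * x.val / n)) =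
        ZMod.dft (fun a ↦ (ρ a : ℂ)) r := by
    simp_rw [cexp_neg_val_mul_val_eq_stdAddChar hQn,
      Fintype.sum_mul_comp_eq_sum_fiberwise (ZMod.castHom hQn (ZMod Q)) _
        (fun a ↦ ZMod.stdAddChar (-(a * r))), ZMod.dft_apply, hρ, smul_eq_mul]
    refine sum_congr rfl fun a _ ↦ ?_
    push_cast [apply_ite]
    exact mul_comm _ _
  have hQ : (Q : ℂ) ≠ 0 := NeZero.ne _
  have hchar (r : ZMod Q) : exp (-(2 * π * I * (2 * k) * r.val / Q)) =
      ZMod.stdAddChar (-(((2 * k : ℤ) : ZMod Q) * r)) := by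
    exact_mod_cast cexp_neg_int_mul_val_eq_stdAddChar (2 * k) r
  simp only [hfourier, hchar]
  rw [ZMod.sum_normSq_dft_mul_stdAddChar]
  push_cast [conj_ofReal]
  field_simp
end

section
/- Let Q be a squarefree positive integer and k a positive integer. Then Σ_{d | Q} |μ(d)|·c_d(2k)/φ(d)² = Π_{p | gcd(2k,Q)} p/(p−1) · Π_{p | Q, p ∤ 2k} p(p−2)/(p−1)², where c_d is the Ramanujan sum, μ the Möbius function, and φ the Euler totient. -/
open Complex Finset Real

/-!
Möbius inversion of the coprimality condition, together with the orthogonality of the `n`-th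
roots of unity, gives `c_d(m) = ∑_{e ∣ d} μ(e) [d/e ∣ m] (d/e)`. Hence
`d ↦ c_d(m)` is multiplicative, with `c_p(m) = p - 1` or `-1` according as `p ∣ m` or not.
For squarefree `Q` the sum of the multiplicative function `c_d(m) / φ(d)²` over `d ∣ Q` is the
Euler product `∏_{p ∣ Q} (1 + c_p(m) / (p - 1)²)`, and the two values of `c_p(m)` give the two
kinds of factors.
-/

theorem Finset.sum_Icc_one_eq_sum_range {M : Type*} [AddCommMonoid M] (f : ℕ → M) (n : ℕ) :
    ∑ c ∈ Icc 1 n, f c = ∑ c ∈ range n, f (c + 1) := by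
  rw [range_eq_Ico, sum_Ico_add' f 0 n 1, zero_add, Ico_add_one_right_eq_Icc]

theorem sum_Icc_pow_of_pow_eq_one {K : Type*} [Field K] [DecidableEq K] {ζ : K} {n : ℕ}
    (hζ : ζ ^ n = 1) : ∑ c ∈ Icc 1 n, ζ ^ c = if ζ = 1 then (n : K) else 0 := by
  split_ifs with h
  · simp [h]
  · simp_rw [sum_Icc_one_eq_sum_range, pow_succ', ← mul_sum, geom_sum_eq h, hζ, sub_self,
      zero_div, mul_zero]

theorem sum_Icc_exp_neg_two_pi_I (m : ℕ) {n : ℕ} (hn : n ≠ 0) :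
    ∑ c ∈ Icc 1 n, Complex.exp (-(2 * π * I * m * c / n)) = if n ∣ m then (n : ℂ) else 0 := by
  set ζ := (Complex.exp (2 * π * I / n))⁻¹
  have hζ : IsPrimitiveRoot ζ n := (isPrimitiveRoot_exp n hn).inv
  have hpow (c : ℕ) : Complex.exp (-(2 * π * I * m * c / n)) = (ζ ^ m) ^ c := by
    rw [← pow_mul, inv_pow, ← Complex.exp_nat_mul, ← Complex.exp_neg]
    congr 1
    push_cast
    ring
  simp_rw [hpow]
  rw [sum_Icc_pow_of_pow_eq_one (by rw [← pow_mul, mul_comm, pow_mul, hζ.pow_eq_one, one_pow])]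
  simp only [hζ.pow_eq_one_iff_dvd]

theorem Finset.sum_Icc_filter_dvd {M : Type*} [AddCommMonoid M] (f : ℕ → M) {e : ℕ} (he : e ≠ 0)
    (n : ℕ) : ∑ b ∈ Icc 1 (e * n) with e ∣ b, f b = ∑ c ∈ Icc 1 n, f (e * c) := by
  suffices hmap : {b ∈ Icc 1 (e * n) | e ∣ b} = (Icc 1 n).map ⟨(e * ·), mul_right_injective₀ he⟩ by
    rw [hmap, sum_map]
    rfl
  ext b
  simp only [mem_filter, mem_Icc, mem_map, Function.Embedding.coeFn_mk]
  constructor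
  · rintro ⟨⟨hb1, hbn⟩, c, rfl⟩
    refine ⟨c, ⟨?_, ?_⟩, rfl⟩
    · exact Nat.pos_of_ne_zero (by rintro rfl; simp at hb1)
    · exact Nat.le_of_mul_le_mul_left hbn (Nat.pos_of_ne_zero he)
  · rintro ⟨c, ⟨hc1, hcn⟩, rfl⟩
    exact ⟨⟨Nat.one_le_iff_ne_zero.mpr (mul_ne_zero he (by omega)), Nat.mul_le_mul_left e hcn⟩,
      dvd_mul_right e c⟩

namespace ArithmeticFunction

open scoped ArithmeticFunction.Moebius

noncomputable def ramanujanSum (m : ℕ) : ArithmeticFunction ℂ :=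
  ⟨fun d => ∑ b ∈ Icc 1 d, if b.gcd d = 1 then Complex.exp (-(2 * π * I * m * b / d)) else 0,
    by simp⟩

theorem ramanujanSum_apply (m d : ℕ) : ramanujanSum m d =
    ∑ b ∈ Icc 1 d, if b.gcd d = 1 then Complex.exp (-(2 * π * I * m * b / d)) else 0 := rfl

def idIfDvd (m : ℕ) : ArithmeticFunction ℕ :=
  ⟨fun e => if e ∣ m then e else 0, by simp⟩

theorem idIfDvd_apply (m e : ℕ) : idIfDvd m e = if e ∣ m then e else 0 := rfl

theorem isMultiplicative_idIfDvd (m : ℕ) : (idIfDvd m).IsMultiplicative := by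
  refine ⟨by simp [idIfDvd_apply], fun {a b} hab => ?_⟩
  have hdvd : a * b ∣ m ↔ a ∣ m ∧ b ∣ m :=
    ⟨fun h => ⟨dvd_of_mul_right_dvd h, dvd_of_mul_left_dvd h⟩,
      fun h => hab.mul_dvd_of_dvd_of_dvd h.1 h.2⟩
  simp only [idIfDvd_apply, hdvd]
  by_cases ha : a ∣ m <;> by_cases hb : b ∣ m <;> simp [ha, hb]

theorem sum_divisors_filter_dvd_moebius {R : Type*} [Ring R] {d : ℕ} (hd : d ≠ 0) (b : ℕ) :
    ∑ e ∈ d.divisors with e ∣ b, (μ e : R) = if b.gcd d = 1 then 1 else 0 := by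
  have hgcd : {e ∈ d.divisors | e ∣ b} = (b.gcd d).divisors := by
    rw [← Nat.divisors_filter_dvd_of_dvd hd (Nat.gcd_dvd_right b d)]
    exact filter_congr fun e he => by simp [Nat.dvd_gcd_iff, Nat.dvd_of_mem_divisors he]
  have h := congrArg (· (b.gcd d)) (coe_moebius_mul_coe_zeta (R := R))
  simp only [coe_mul_zeta_apply, intCoe_apply, one_apply] at h
  rw [hgcd, h]

theorem moebius_mul_idIfDvd_apply (m d : ℕ) :
    ((μ : ArithmeticFunction ℂ) * (idIfDvd m : ArithmeticFunction ℂ)) d =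
      ∑ e ∈ d.divisors, (μ e : ℂ) * (idIfDvd m (d / e) : ℂ) := by
  rw [mul_apply, Nat.sum_divisorsAntidiagonal
    (fun x y => (μ : ArithmeticFunction ℂ) x * (idIfDvd m : ArithmeticFunction ℂ) y)]
  simp only [intCoe_apply, natCoe_apply]

theorem ramanujanSum_eq_moebius_mul (m : ℕ) :
    ramanujanSum m = (μ : ArithmeticFunction ℂ) * (idIfDvd m : ArithmeticFunction ℂ) := by
  ext d
  rcases eq_or_ne d 0 with rfl | hd
  · simp
  set z : ℕ → ℂ := fun b => Complex.exp (-(2 * π * I * m * b / d))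
  have hinner {e : ℕ} (he : e ∈ d.divisors) :
      ∑ b ∈ Icc 1 d with e ∣ b, z b = idIfDvd m (d / e) := by
    obtain ⟨n, rfl⟩ := Nat.dvd_of_mem_divisors he
    have he0 : e ≠ 0 := left_ne_zero_of_mul hd
    have hn0 : n ≠ 0 := right_ne_zero_of_mul hd
    rw [sum_Icc_filter_dvd z he0, Nat.mul_div_cancel_left n (Nat.pos_of_ne_zero he0),
      idIfDvd_apply, Nat.cast_ite, Nat.cast_zero, ← sum_Icc_exp_neg_two_pi_I m hn0]
    refine sum_congr rfl fun c _ => ?_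
    simp only [z]
    congr 2
    field_simp
    push_cast
    ring
  calc ramanujanSum m d = ∑ b ∈ Icc 1 d, ∑ e ∈ d.divisors with e ∣ b, (μ e : ℂ) * z b := by
        simp_rw [← sum_mul, sum_divisors_filter_dvd_moebius hd, ite_mul, one_mul, zero_mul]
        rfl
    _ = ∑ e ∈ d.divisors, (μ e : ℂ) * ∑ b ∈ Icc 1 d with e ∣ b, z b := by
        simp_rw [sum_filter, mul_sum, mul_ite, mul_zero]
        exact sum_comm
    _ = ((μ : ArithmeticFunction ℂ) * (idIfDvd m : ArithmeticFunction ℂ)) d := by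
        rw [moebius_mul_idIfDvd_apply]
        exact sum_congr rfl fun e he => by rw [hinner he]

theorem isMultiplicative_ramanujanSum (m : ℕ) : (ramanujanSum m).IsMultiplicative := by
  rw [ramanujanSum_eq_moebius_mul]
  exact isMultiplicative_moebius.intCast.mul (isMultiplicative_idIfDvd m).natCast

theorem ramanujanSum_prime (m : ℕ) {p : ℕ} (hp : p.Prime) :
    ramanujanSum m p = if p ∣ m then (p : ℂ) - 1 else -1 := by
  rw [ramanujanSum_eq_moebius_mul, moebius_mul_idIfDvd_apply, hp.sum_divisors]
  simp only [Nat.div_self hp.pos, Nat.div_one, idIfDvd_apply,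
    moebius_apply_prime hp, moebius_apply_one, one_dvd]
  split_ifs <;> push_cast <;> ring

def totient : ArithmeticFunction ℕ :=
  ⟨Nat.totient, Nat.totient_zero⟩

theorem totient_apply (n : ℕ) : totient n = n.totient := rfl

theorem isMultiplicative_totient : totient.IsMultiplicative :=
  ⟨Nat.totient_one, fun h => Nat.totient_mul h⟩

theorem one_add_ramanujanSum_div_totient_sq (m : ℕ) {p : ℕ} (hp : p.Prime) :
    1 + ramanujanSum m p / (p.totient : ℂ) ^ 2 =
      if p ∣ m then (p : ℂ) / (p - 1) else (p : ℂ) * (p - 2) / (p - 1) ^ 2 := by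
  have hp1 : (p : ℂ) - 1 ≠ 0 := by
    rw [sub_ne_zero, Ne, Nat.cast_eq_one]
    exact hp.ne_one
  rw [ramanujanSum_prime m hp, Nat.totient_prime hp, Nat.cast_sub hp.one_le, Nat.cast_one]
  split_ifs
  · field_simp
    ring
  · field_simp
    ring

theorem sum_divisors_ramanujanSum_div_totient_sq {Q : ℕ} (hQ : Squarefree Q) (m : ℕ) :
    ∑ d ∈ Q.divisors, ramanujanSum m d / (d.totient : ℂ) ^ 2 =
      ∏ p ∈ Q.primeFactors,
        if p ∣ m then (p : ℂ) / (p - 1) else (p : ℂ) * (p - 2) / (p - 1) ^ 2 := by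
  set F := (ramanujanSum m).pdiv ((totient : ArithmeticFunction ℂ).ppow 2)
  have hF : F.IsMultiplicative :=
    (isMultiplicative_ramanujanSum m).pdiv isMultiplicative_totient.natCast.ppow
  have hFapply (d : ℕ) : F d = ramanujanSum m d / (d.totient : ℂ) ^ 2 := by
    simp [F, pdiv_apply, ppow_apply, natCoe_apply, totient_apply]
  simp_rw [← hFapply, ← hF.prodPrimeFactors_one_add_of_squarefree hQ, hFapply]
  exact prod_congr rfl fun p hp =>
    one_add_ramanujanSum_div_totient_sq m (Nat.prime_of_mem_primeFactors hp)

end ArithmeticFunction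

theorem stmt_12_general (Q k : ℕ) (hQsf : Squarefree Q) (hk : 0 < k) :
    (∑ d ∈ Q.divisors,
        ((|ArithmeticFunction.moebius d| : ℤ) : ℂ) *
          (∑ b ∈ Finset.Icc 1 d, if Nat.gcd b d = 1 then
              Complex.exp (-(2 * π * I * (2 * k) * b / d)) else 0) /
            (Nat.totient d : ℂ) ^ 2) =
      (∏ p ∈ Q.primeFactors ∩ (2 * k).primeFactors, ((p : ℂ) / (p - 1))) *
        ∏ p ∈ Q.primeFactors \ (2 * k).primeFactors, ((p : ℂ) * (p - 2) / (p - 1) ^ 2) := by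
  open ArithmeticFunction in
  calc _ = ∑ d ∈ Q.divisors, ramanujanSum (2 * k) d / (d.totient : ℂ) ^ 2 :=
        sum_congr rfl fun d hd => by
          rw [abs_moebius_eq_one_of_squarefree
            (hQsf.squarefree_of_dvd (Nat.dvd_of_mem_divisors hd)), ramanujanSum_apply]
          push_cast
          rw [one_mul]
    _ = ∏ p ∈ Q.primeFactors,
          if p ∣ 2 * k then (p : ℂ) / (p - 1) else (p : ℂ) * (p - 2) / (p - 1) ^ 2 :=
        sum_divisors_ramanujanSum_div_totient_sq hQsf (2 * k)
    _ = _ := by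
      rw [← prod_inter_mul_prod_sdiff Q.primeFactors (2 * k).primeFactors]
      congr 1 <;> refine prod_congr rfl fun p hp => ?_
      · exact if_pos (Nat.dvd_of_mem_primeFactors (mem_inter.mp hp).2)
      · obtain ⟨hpQ, hpk⟩ := mem_sdiff.mp hp
        exact if_neg fun h => hpk (Nat.mem_primeFactors.mpr
          ⟨Nat.prime_of_mem_primeFactors hpQ, h, by omega⟩)

theorem stmt_12 (Q k : ℕ) (hQ : 0 < Q) (hQsf : Squarefree Q) (hk : 0 < k) :
    (∑ d ∈ Q.divisors,
        ((|ArithmeticFunction.moebius d| : ℤ) : ℂ) *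
          (∑ b ∈ Finset.Icc 1 d, if Nat.gcd b d = 1 then
              Complex.exp (-(2 * π * I * (2 * k) * b / d)) else 0) /
            (Nat.totient d : ℂ) ^ 2) =
      (∏ p ∈ Q.primeFactors ∩ (2 * k).primeFactors, ((p : ℂ) / (p - 1))) *
        ∏ p ∈ Q.primeFactors \ (2 * k).primeFactors, ((p : ℂ) * (p - 2) / (p - 1) ^ 2) :=
  stmt_12_general Q k hQsf hk
end
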